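/- (Uniqueness in the weak feedback regime.) Suppose the law ν₀ of X₀ has a density V₀ : (0,∞) → [0,∞) with ‖V₀‖_∞ := ess sup V₀ < ∞. Let L and L̄ be two solutions of the McKean–Vlasov problem (MV) associated with the same X₀, Z, f and α, and let T > 0. If |α| · ‖V₀‖_∞ · sup{ |f(y) − f(z)| / |y − z| : y ≠ z, y, z ∈ [0, max(L_T, L̄_T)] } < 1, then L_t = L̄_t for all t ∈ [0, T]. -/

import Mathlib

open MeasureTheory ProbabilityTheory Filter Set Function
open scoped ENNReal

noncomputable section

variable {Ω : Type*} [MeasureSpace Ω]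

/-- The event that the particle `X_s = X₀ + Z_s − α f(L_s)` has reached `(-∞, 0]` by time `t`. -/
def hitBy (X0 : Ω → ℝ) (Z : ℝ → Ω → ℝ) (f : ℝ → ℝ) (α : ℝ) (L : ℝ → ℝ) (t : ℝ) : Set Ω :=
  {ω | ∃ s ∈ Set.Icc (0 : ℝ) t, X0 ω + Z s ω - α * f (L s) ≤ 0}

/-- A solution of the McKean--Vlasov problem (MV). -/
def IsMVSolution (X0 : Ω → ℝ) (Z : ℝ → Ω → ℝ) (f : ℝ → ℝ) (α : ℝ) (L : ℝ → ℝ) : Prop :=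
  MonotoneOn L (Set.Ici 0) ∧ L 0 = 0 ∧ (∀ t, 0 ≤ t → L t ∈ Set.Icc (0 : ℝ) 1) ∧
  (∀ t, 0 ≤ t → ContinuousWithinAt L (Set.Ici t) t) ∧
  (∀ t, 0 ≤ t → L t = ((ℙ : Measure Ω) (hitBy X0 Z f α L t)).toReal)

/-- The (extended-real-valued) Lipschitz seminorm of `f` over `[0, x]`:
`sup { |f y − f z| / |y − z| : y ≠ z, y, z ∈ [0, x] }`. -/
def lipSeminorm (f : ℝ → ℝ) (x : ℝ) : ℝ≥0∞ :=
  ⨆ y ∈ Set.Icc (0 : ℝ) x, ⨆ z ∈ Set.Icc (0 : ℝ) x, ⨆ _ : y ≠ z,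
    ENNReal.ofReal (|f y - f z| / |y - z|)

private lemma lip_le {f : ℝ → ℝ} {x : ℝ} (hK : lipSeminorm f x ≠ ⊤)
    {y z : ℝ} (hy : y ∈ Set.Icc 0 x) (hz : z ∈ Set.Icc 0 x) :
    |f y - f z| ≤ (lipSeminorm f x).toReal * |y - z| := by
  rcases eq_or_ne y z with rfl | hyz
  · simp
  have h1 : ENNReal.ofReal (|f y - f z| / |y - z|) ≤ lipSeminorm f x :=
    le_iSup₂_of_le y hy (le_iSup₂_of_le z hz (le_iSup_of_le hyz le_rfl))
  have h2 : |f y - f z| / |y - z| ≤ (lipSeminorm f x).toReal :=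
    (ENNReal.ofReal_le_iff_le_toReal hK).mp h1
  have hpos : 0 < |y - z| := abs_pos.mpr (sub_ne_zero.mpr hyz)
  calc |f y - f z| = |f y - f z| / |y - z| * |y - z| := by field_simp
    _ ≤ (lipSeminorm f x).toReal * |y - z| :=
      mul_le_mul_of_nonneg_right h2 (abs_nonneg _)

private lemma hit_diff_le
    (hprob : IsProbabilityMeasure (ℙ : Measure Ω))
    (X0 : Ω → ℝ) (hX0meas : Measurable X0)
    (Z : ℝ → Ω → ℝ) (hZmeas : ∀ t, Measurable (Z t))
    (hZcont : ∀ ω, Continuous fun t => Z t ω)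
    (hindep : IndepFun X0 (fun ω => fun t => Z t ω) ℙ)
    (f : ℝ → ℝ) (hf : ContinuousOn f (Set.Icc 0 1)) (α : ℝ)
    (V₀ : ℝ → ℝ) (hV₀nonneg : ∀ x, 0 ≤ V₀ x)
    (hdens : Measure.map X0 (ℙ : Measure Ω)
      = volume.withDensity fun x => ENNReal.ofReal (V₀ x))
    (L Lbar : ℝ → ℝ)
    (hL : IsMVSolution X0 Z f α L) (hLbar : IsMVSolution X0 Z f α Lbar)
    (t : ℝ) (ht : 0 ≤ t) (δ : ℝ) (hδ0 : 0 ≤ δ)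
    (hδ : ∀ s ∈ Set.Icc (0:ℝ) t, |α * f (L s) - α * f (Lbar s)| ≤ δ) :
    (ℙ : Measure Ω) (hitBy X0 Z f α L t \ hitBy X0 Z f α Lbar t)
      ≤ eLpNorm V₀ ⊤ volume * ENNReal.ofReal δ := by
  classical
  -- a countable set of times, dense from the right in `[0, t]` and containing `t`
  set u : ℕ → ℝ := fun n => max 0 (min t ((((Denumerable.eqv ℚ).symm n : ℚ)) : ℝ)) with hu_def
  have hu_mem : ∀ n, u n ∈ Set.Icc 0 t := fun n =>
    ⟨le_max_left _ _, max_le ht (min_le_left _ _)⟩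
  have hu_rat : ∀ q : ℚ, (0:ℝ) ≤ (q:ℝ) → (q:ℝ) ≤ t → ∃ n, u n = (q:ℝ) := by
    intro q hq0 hqt
    refine ⟨Denumerable.eqv ℚ q, ?_⟩
    rw [hu_def]
    simp only [Equiv.symm_apply_apply]
    rw [min_eq_right hqt, max_eq_right hq0]
  have hu_t : ∃ n, u n = t := by
    obtain ⟨q, hq⟩ := exists_rat_gt t
    refine ⟨Denumerable.eqv ℚ q, ?_⟩
    rw [hu_def]
    simp only [Equiv.symm_apply_apply]
    rw [min_eq_left hq.le, max_eq_right ht]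
  have hu_dense : ∀ s, 0 ≤ s → s < t → ∀ b, s < b → ∃ n, s < u n ∧ u n < b := by
    intro s hs0 hst b hb
    obtain ⟨q, hq1, hq2⟩ := exists_rat_btwn (lt_min hb hst)
    obtain ⟨n, hn⟩ := hu_rat q (hs0.trans hq1.le)
      (le_of_lt (lt_of_lt_of_le hq2 (min_le_right _ _)))
    exact ⟨n, by rw [hn]; exact hq1, by rw [hn]; exact hq2.trans_le (min_le_left _ _)⟩
  -- the path functional and the suprema
  set W : Ω → ℝ → ℝ := fun ω s => Z s ω with hW_def
  have hWmeas : Measurable W := measurable_pi_lambda _ fun s => hZmeas s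
  set M : (ℝ → ℝ) → (ℝ → ℝ) → EReal :=
    fun Λ w => ⨆ n, ((α * f (Λ (u n)) - w (u n) : ℝ) : EReal) with hM_def
  set Mδ : (ℝ → ℝ) → EReal :=
    fun w => ⨆ n, ((α * f (Lbar (u n)) - w (u n) + δ : ℝ) : EReal) with hMδ_def
  have hMmeas : ∀ Λ : ℝ → ℝ, Measurable (M Λ) := fun Λ =>
    Measurable.iSup fun n =>
      (((measurable_pi_apply (u n)).const_sub _)).coe_real_ereal
  have hMδmeas : Measurable Mδ :=
    Measurable.iSup fun n =>
      (show Measurable fun w : ℝ → ℝ => α * f (Lbar (u n)) - w (u n) + δ by fun_prop).coe_real_ereal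
  -- if ω hits by time t for Λ, then X0 ω ≤ M Λ (W ω)
  have hhit : ∀ Λ : ℝ → ℝ, IsMVSolution X0 Z f α Λ → ∀ ω,
      ω ∈ hitBy X0 Z f α Λ t → ((X0 ω : ℝ) : EReal) ≤ M Λ (W ω) := by
    rintro Λ hΛ ω ⟨s, hs, hXs⟩
    have hGs : X0 ω ≤ α * f (Λ s) - Z s ω := by linarith
    have key : ((α * f (Λ s) - Z s ω : ℝ) : EReal) ≤ M Λ (W ω) := by
      rcases eq_or_lt_of_le hs.2 with heq | hst
      · obtain ⟨n, hn⟩ := hu_t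
        have hn' : u n = s := by rw [hn, heq]
        refine le_trans (le_of_eq ?_) (le_iSup (fun n => ((α * f (Λ (u n)) - W ω (u n) : ℝ) : EReal)) n)
        rw [hn']
      · by_contra hcon
        push_neg at hcon
        obtain ⟨x, hx1, hx2⟩ := EReal.lt_iff_exists_real_btwn.mp hcon
        have hx2' : x < α * f (Λ s) - Z s ω := by exact_mod_cast hx2
        have hΛc : ContinuousWithinAt Λ (Set.Ici s) s := hΛ.2.2.2.1 s hs.1
        have hfc : ContinuousWithinAt (fun r => f (Λ r)) (Set.Ici s) s := by
          have hmaps : Set.MapsTo Λ (Set.Ici s) (Set.Icc (0:ℝ) 1) := fun r hr =>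
            hΛ.2.2.1 r (le_trans hs.1 hr)
          exact (hf (Λ s) (hΛ.2.2.1 s hs.1)).comp hΛc hmaps
        have hGc : ContinuousWithinAt (fun r => α * f (Λ r) - Z r ω) (Set.Ici s) s :=
          (continuousWithinAt_const.mul hfc).sub ((hZcont ω).continuousWithinAt)
        have hev : (fun r => α * f (Λ r) - Z r ω) ⁻¹' (Set.Ioi x) ∈
            nhdsWithin s (Set.Ici s) := hGc (Ioi_mem_nhds hx2')
        obtain ⟨b, hb, hsub⟩ := mem_nhdsGE_iff_exists_Ico_subset.mp hev
        obtain ⟨n, hn1, hn2⟩ := hu_dense s hs.1 hst b hb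
        have hxn : x < α * f (Λ (u n)) - Z (u n) ω := hsub ⟨hn1.le, hn2⟩
        have h2 : ((x : ℝ) : EReal) < M Λ (W ω) :=
          lt_of_lt_of_le (EReal.coe_lt_coe_iff.mpr hxn)
            (le_iSup (fun n => ((α * f (Λ (u n)) - W ω (u n) : ℝ) : EReal)) n)
        exact lt_irrefl _ (hx1.trans h2)
    exact le_trans (EReal.coe_le_coe_iff.mpr hGs) key
  -- if ω has not hit by time t for Lbar, then M Lbar (W ω) ≤ X0 ω
  have hmiss : ∀ ω, ω ∉ hitBy X0 Z f α Lbar t →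
      M Lbar (W ω) ≤ ((X0 ω : ℝ) : EReal) := by
    intro ω hω
    refine iSup_le fun n => ?_
    rw [EReal.coe_le_coe_iff]
    by_contra hcon
    push_neg at hcon
    exact hω ⟨u n, hu_mem n, by simp only [hW_def] at hcon ⊢; linarith⟩
  have hML : ∀ w, M L w ≤ Mδ w := by
    intro w
    refine iSup_le fun n => le_trans ?_
      (le_iSup (fun n => ((α * f (Lbar (u n)) - w (u n) + δ : ℝ) : EReal)) n)
    rw [EReal.coe_le_coe_iff]
    have h := abs_le.mp (hδ (u n) (hu_mem n))
    linarith [h.1, h.2]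
  -- the bad set in path × initial-condition space
  set S : Set ((ℝ → ℝ) × ℝ) :=
    {p | M Lbar p.1 ≤ ((p.2 : ℝ) : EReal) ∧ ((p.2 : ℝ) : EReal) ≤ Mδ p.1} with hS_def
  have hSmeas : MeasurableSet S := by
    have h1 : MeasurableSet {p : (ℝ → ℝ) × ℝ | M Lbar p.1 ≤ ((p.2 : ℝ) : EReal)} :=
      measurableSet_le ((hMmeas Lbar).comp measurable_fst)
        (measurable_coe_real_ereal.comp measurable_snd)
    have h2 : MeasurableSet {p : (ℝ → ℝ) × ℝ | ((p.2 : ℝ) : EReal) ≤ Mδ p.1} :=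
      measurableSet_le (measurable_coe_real_ereal.comp measurable_snd)
        (hMδmeas.comp measurable_fst)
    have hSeq : S = {p : (ℝ → ℝ) × ℝ | M Lbar p.1 ≤ ((p.2 : ℝ) : EReal)} ∩
        {p : (ℝ → ℝ) × ℝ | ((p.2 : ℝ) : EReal) ≤ Mδ p.1} := rfl
    rw [hSeq]; exact h1.inter h2
  have hsubset : hitBy X0 Z f α L t \ hitBy X0 Z f α Lbar t ⊆
      (fun ω => (W ω, X0 ω)) ⁻¹' S := by
    rintro ω ⟨hA, hAbar⟩
    exact ⟨hmiss ω hAbar, le_trans (hhit L hL ω hA) (hML (W ω))⟩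
  haveI : IsProbabilityMeasure ((ℙ : Measure Ω).map W) :=
    Measure.isProbabilityMeasure_map hWmeas.aemeasurable
  haveI : IsProbabilityMeasure ((ℙ : Measure Ω).map X0) :=
    Measure.isProbabilityMeasure_map hX0meas.aemeasurable
  have hprod : (ℙ : Measure Ω).map (fun ω => (W ω, X0 ω))
      = ((ℙ : Measure Ω).map W).prod ((ℙ : Measure Ω).map X0) :=
    (indepFun_iff_map_prod_eq_prod_map_map hWmeas.aemeasurable
      hX0meas.aemeasurable).mp hindep.symm
  have hslice : ∀ w : ℝ → ℝ, ((ℙ : Measure Ω).map X0) {x : ℝ | (w, x) ∈ S}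
      ≤ eLpNorm V₀ ⊤ volume * ENNReal.ofReal δ := by
    intro w
    by_cases htop : M Lbar w = ⊤
    · have : {x : ℝ | (w, x) ∈ S} = ∅ := by
        ext x
        simp only [hS_def, Set.mem_setOf_eq, Set.mem_empty_iff_false, iff_false, not_and]
        intro h1
        exact absurd (htop ▸ h1) (not_le.mpr (EReal.coe_lt_top x))
      rw [this]
      simp
    · have hbot : M Lbar w ≠ ⊥ := by
        intro hbot
        have h0 : ((α * f (Lbar (u 0)) - w (u 0) : ℝ) : EReal) ≤ M Lbar w :=
          le_iSup (fun n => ((α * f (Lbar (u n)) - w (u n) : ℝ) : EReal)) 0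
        rw [hbot, le_bot_iff] at h0
        exact EReal.coe_ne_bot _ h0
      set r : ℝ := (M Lbar w).toReal with hr_def
      have hr : ((r : ℝ) : EReal) = M Lbar w := EReal.coe_toReal htop hbot
      have hMδle : Mδ w ≤ ((r + δ : ℝ) : EReal) := by
        refine iSup_le fun n => ?_
        rw [EReal.coe_le_coe_iff]
        have hn : ((α * f (Lbar (u n)) - w (u n) : ℝ) : EReal) ≤ ((r : ℝ) : EReal) := by
          rw [hr]
          exact le_iSup (fun n => ((α * f (Lbar (u n)) - w (u n) : ℝ) : EReal)) n
        rw [EReal.coe_le_coe_iff] at hn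
        linarith
      have hsub2 : {x : ℝ | (w, x) ∈ S} ⊆ Set.Icc r (r + δ) := by
        intro x hx
        obtain ⟨h1, h2⟩ := hx
        constructor
        · exact EReal.coe_le_coe_iff.mp (hr ▸ h1)
        · exact EReal.coe_le_coe_iff.mp (le_trans h2 hMδle)
      calc ((ℙ : Measure Ω).map X0) {x : ℝ | (w, x) ∈ S}
          ≤ ((ℙ : Measure Ω).map X0) (Set.Icc r (r + δ)) := measure_mono hsub2
        _ = ∫⁻ x in Set.Icc r (r + δ), ENNReal.ofReal (V₀ x) := by
            rw [hdens, withDensity_apply _ measurableSet_Icc]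
        _ ≤ ∫⁻ _ in Set.Icc r (r + δ), eLpNorm V₀ ⊤ volume := by
            refine lintegral_mono_ae (ae_restrict_of_ae ?_)
            filter_upwards [ae_le_essSup (f := fun x => (‖V₀ x‖₊ : ℝ≥0∞)) (μ := volume)] with x hx
            rw [eLpNorm_exponent_top, eLpNormEssSup]
            calc ENNReal.ofReal (V₀ x) = (‖V₀ x‖₊ : ℝ≥0∞) :=
                  (Real.enorm_eq_ofReal (hV₀nonneg x)).symm
              _ ≤ _ := hx
        _ = eLpNorm V₀ ⊤ volume * volume (Set.Icc r (r + δ)) := by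
            rw [lintegral_const, Measure.restrict_apply_univ]
        _ = eLpNorm V₀ ⊤ volume * ENNReal.ofReal δ := by
            rw [Real.volume_Icc, add_sub_cancel_left]
  calc (ℙ : Measure Ω) (hitBy X0 Z f α L t \ hitBy X0 Z f α Lbar t)
      ≤ (ℙ : Measure Ω) ((fun ω => (W ω, X0 ω)) ⁻¹' S) := measure_mono hsubset
    _ = ((ℙ : Measure Ω).map (fun ω => (W ω, X0 ω))) S :=
        (Measure.map_apply (hWmeas.prodMk hX0meas) hSmeas).symm
    _ = (((ℙ : Measure Ω).map W).prod ((ℙ : Measure Ω).map X0)) S := by rw [hprod]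
    _ = ∫⁻ w, ((ℙ : Measure Ω).map X0) {x : ℝ | (w, x) ∈ S} ∂((ℙ : Measure Ω).map W) :=
        Measure.prod_apply hSmeas
    _ ≤ ∫⁻ _, eLpNorm V₀ ⊤ volume * ENNReal.ofReal δ ∂((ℙ : Measure Ω).map W) :=
        lintegral_mono hslice
    _ = eLpNorm V₀ ⊤ volume * ENNReal.ofReal δ := by
        rw [lintegral_const, measure_univ, mul_one]

/-- **Uniqueness in the weak feedback regime (Theorem 2.2).** If `ν₀` has a bounded density
`V₀` and `|α| ⬝ ‖V₀‖_∞ ⬝ ‖f‖_{Lip(L_T ∨ L̄_T)} < 1`, then any two solutions of (MV) agree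
on `[0, T]`. -/
theorem mv_uniqueness_weak_feedback
    (hprob : IsProbabilityMeasure (ℙ : Measure Ω))
    (X0 : Ω → ℝ) (hX0meas : Measurable X0) (hX0pos : ∀ ω, 0 < X0 ω)
    (Z : ℝ → Ω → ℝ) (hZmeas : ∀ t, Measurable (Z t))
    (hZcont : ∀ ω, Continuous fun t => Z t ω)
    (hindep : IndepFun X0 (fun ω => fun t => Z t ω) ℙ)
    (f : ℝ → ℝ) (hf : ContinuousOn f (Set.Icc 0 1)) (α : ℝ)
    (V₀ : ℝ → ℝ) (hV₀meas : Measurable V₀) (hV₀nonneg : ∀ x, 0 ≤ V₀ x)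
    (hV₀supp : ∀ x ≤ (0 : ℝ), V₀ x = 0)
    (hdens : Measure.map X0 (ℙ : Measure Ω)
      = volume.withDensity fun x => ENNReal.ofReal (V₀ x))
    (hV₀bdd : MemLp V₀ ⊤ volume)
    (L Lbar : ℝ → ℝ)
    (hL : IsMVSolution X0 Z f α L) (hLbar : IsMVSolution X0 Z f α Lbar)
    (T : ℝ) (hT : 0 < T)
    (hsmall : ENNReal.ofReal |α| * eLpNorm V₀ ⊤ volume *
        lipSeminorm f (max (L T) (Lbar T)) < 1) :
    ∀ t ∈ Set.Icc (0 : ℝ) T, L t = Lbar t := by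
  classical
  by_cases hα : α = 0
  · intro t ht
    rw [hL.2.2.2.2 t ht.1, hLbar.2.2.2.2 t ht.1]
    congr 2
    unfold hitBy
    simp [hα]
  by_cases hV : eLpNorm V₀ ⊤ volume = 0
  · exfalso
    have hV0 : V₀ =ᵐ[volume] 0 :=
      (eLpNorm_eq_zero_iff hV₀bdd.aestronglyMeasurable (by norm_num)).mp hV
    have hmap0 : Measure.map X0 (ℙ : Measure Ω) = 0 := by
      rw [hdens]
      refine (withDensity_eq_zero_iff (hV₀meas.ennreal_ofReal).aemeasurable).mpr ?_
      filter_upwards [hV0] with x hx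
      simp [hx]
    haveI : IsProbabilityMeasure ((ℙ : Measure Ω).map X0) :=
      Measure.isProbabilityMeasure_map hX0meas.aemeasurable
    have h1 : ((ℙ : Measure Ω).map X0) Set.univ = 1 := measure_univ
    rw [hmap0] at h1
    simp at h1
  -- nondegenerate case
  have hαpos : 0 < |α| := abs_pos.mpr hα
  have hVne_top : eLpNorm V₀ ⊤ volume ≠ ⊤ := hV₀bdd.2.ne
  have hKfin : lipSeminorm f (max (L T) (Lbar T)) ≠ ⊤ := by
    intro hKtop
    rw [hKtop] at hsmall
    have hne : ENNReal.ofReal |α| * eLpNorm V₀ ⊤ volume ≠ 0 := by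
      refine mul_ne_zero ?_ hV
      simpa [ENNReal.ofReal_eq_zero, not_le] using hαpos
    rw [ENNReal.mul_top hne] at hsmall
    exact not_top_lt hsmall
  set Kr : ℝ := (lipSeminorm f (max (L T) (Lbar T))).toReal with hKr_def
  set Vr : ℝ := (eLpNorm V₀ ⊤ volume).toReal with hVr_def
  have hKr0 : 0 ≤ Kr := ENNReal.toReal_nonneg
  have hVr0 : 0 ≤ Vr := ENNReal.toReal_nonneg
  have hc1 : |α| * Vr * Kr < 1 := by
    have : ENNReal.ofReal (|α| * Vr * Kr) < 1 := by
      rw [ENNReal.ofReal_mul (mul_nonneg hαpos.le hVr0), ENNReal.ofReal_mul hαpos.le,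
        hVr_def, hKr_def, ENNReal.ofReal_toReal hVne_top, ENNReal.ofReal_toReal hKfin]
      exact hsmall
    exact lt_of_not_ge fun h => absurd this (not_lt.mpr (by
      simpa using ENNReal.one_le_ofReal.mpr h))
  -- the sup of the difference on [0, T]
  set DT : ℝ := sSup ((fun s => |L s - Lbar s|) '' Set.Icc 0 T) with hDT_def
  have himg_ne : ((fun s => |L s - Lbar s|) '' Set.Icc 0 T).Nonempty :=
    ⟨|L 0 - Lbar 0|, Set.mem_image_of_mem _ ⟨le_refl 0, hT.le⟩⟩
  have himg_bdd : BddAbove ((fun s => |L s - Lbar s|) '' Set.Icc 0 T) := by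
    refine ⟨1, ?_⟩
    rintro _ ⟨s, hs, rfl⟩
    have h1 := hL.2.2.1 s hs.1
    have h2 := hLbar.2.2.1 s hs.1
    rw [abs_le]
    constructor <;> [linarith [h1.1, h2.2]; linarith [h1.2, h2.1]]
  have hDT_mem : ∀ s ∈ Set.Icc (0:ℝ) T, |L s - Lbar s| ≤ DT := fun s hs =>
    le_csSup himg_bdd (Set.mem_image_of_mem _ hs)
  have hDT0 : 0 ≤ DT :=
    le_trans (abs_nonneg _) (hDT_mem 0 ⟨le_refl 0, hT.le⟩)
  -- the uniform Lipschitz bound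
  set δ : ℝ := |α| * (Kr * DT) with hδ_def
  have hδ0 : 0 ≤ δ := mul_nonneg hαpos.le (mul_nonneg hKr0 hDT0)
  have hδbound : ∀ t' ∈ Set.Icc (0:ℝ) T, ∀ s ∈ Set.Icc (0:ℝ) t',
      |α * f (L s) - α * f (Lbar s)| ≤ δ := by
    intro t' ht' s hs
    have hsT : s ∈ Set.Icc (0:ℝ) T := ⟨hs.1, hs.2.trans ht'.2⟩
    have hLs : L s ∈ Set.Icc (0:ℝ) (max (L T) (Lbar T)) := by
      refine ⟨(hL.2.2.1 s hsT.1).1, le_trans ?_ (le_max_left _ _)⟩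
      exact hL.1 (Set.mem_Ici.mpr hsT.1) (Set.mem_Ici.mpr hT.le) hsT.2
    have hLbars : Lbar s ∈ Set.Icc (0:ℝ) (max (L T) (Lbar T)) := by
      refine ⟨(hLbar.2.2.1 s hsT.1).1, le_trans ?_ (le_max_right _ _)⟩
      exact hLbar.1 (Set.mem_Ici.mpr hsT.1) (Set.mem_Ici.mpr hT.le) hsT.2
    have hlip := lip_le hKfin hLs hLbars
    calc |α * f (L s) - α * f (Lbar s)| = |α| * |f (L s) - f (Lbar s)| := by
          rw [← abs_mul]; ring_nf
      _ ≤ |α| * (Kr * |L s - Lbar s|) :=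
          mul_le_mul_of_nonneg_left (by rw [hKr_def]; exact hlip) hαpos.le
      _ ≤ |α| * (Kr * DT) :=
          mul_le_mul_of_nonneg_left
            (mul_le_mul_of_nonneg_left (hDT_mem s hsT) hKr0) hαpos.le
  -- per-time estimate
  have hone : ∀ (L1 L2 : ℝ → ℝ), IsMVSolution X0 Z f α L1 → IsMVSolution X0 Z f α L2 →
      (∀ s ∈ Set.Icc (0:ℝ) T, |α * f (L1 s) - α * f (L2 s)| ≤ δ) →
      ∀ t' ∈ Set.Icc (0:ℝ) T, L1 t' - L2 t' ≤ Vr * δ := by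
    intro L1 L2 hL1 hL2 hd t' ht'
    have hδ' : ∀ s ∈ Set.Icc (0:ℝ) t', |α * f (L1 s) - α * f (L2 s)| ≤ δ :=
      fun s hs => hd s ⟨hs.1, hs.2.trans ht'.2⟩
    have hkey := hit_diff_le hprob X0 hX0meas Z hZmeas hZcont hindep f hf α V₀
      hV₀nonneg hdens L1 L2 hL1 hL2 t' ht'.1 δ hδ0 hδ'
    have hA := hL1.2.2.2.2 t' ht'.1
    have hAbar := hL2.2.2.2.2 t' ht'.1
    set A := hitBy X0 Z f α L1 t'
    set Abar := hitBy X0 Z f α L2 t'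
    have hsub : A ⊆ (A \ Abar) ∪ Abar := by
      intro ω hω
      by_cases h : ω ∈ Abar
      · exact Or.inr h
      · exact Or.inl ⟨hω, h⟩
    have hmeasle : (ℙ : Measure Ω) A ≤ (ℙ : Measure Ω) (A \ Abar) + (ℙ : Measure Ω) Abar :=
      le_trans (measure_mono hsub) (measure_union_le _ _)
    have hfin1 : (ℙ : Measure Ω) (A \ Abar) ≠ ⊤ := measure_ne_top _ _
    have hfin2 : (ℙ : Measure Ω) Abar ≠ ⊤ := measure_ne_top _ _
    have htoReal : ((ℙ : Measure Ω) A).toReal ≤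
        ((ℙ : Measure Ω) (A \ Abar)).toReal + ((ℙ : Measure Ω) Abar).toReal := by
      rw [← ENNReal.toReal_add hfin1 hfin2]
      exact ENNReal.toReal_mono (by finiteness) hmeasle
    have hdiff_toReal : ((ℙ : Measure Ω) (A \ Abar)).toReal ≤ Vr * δ := by
      have h := ENNReal.toReal_mono (ENNReal.mul_ne_top hVne_top ENNReal.ofReal_ne_top) hkey
      rwa [ENNReal.toReal_mul, ENNReal.toReal_ofReal hδ0, ← hVr_def] at h
    rw [hA, hAbar]
    linarith
  -- conclude DT ≤ c * DT
  have hDTle : DT ≤ |α| * Vr * Kr * DT := by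
    refine csSup_le himg_ne ?_
    rintro _ ⟨s, hs, rfl⟩
    have hdLL : ∀ s ∈ Set.Icc (0:ℝ) T, |α * f (L s) - α * f (Lbar s)| ≤ δ :=
      fun s hs => hδbound T ⟨hT.le, le_refl T⟩ s hs
    have h1 := hone L Lbar hL hLbar hdLL s hs
    have h2 := hone Lbar L hLbar hL (fun s hs => by rw [abs_sub_comm]; exact hdLL s hs) s hs
    rw [abs_le]
    constructor
    · have : Vr * δ = |α| * Vr * Kr * DT := by rw [hδ_def]; ring
      linarith
    · have : Vr * δ = |α| * Vr * Kr * DT := by rw [hδ_def]; ring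
      linarith
  have hDTzero : DT ≤ 0 := by nlinarith
  intro t ht
  have := hDT_mem t ht
  have habs : |L t - Lbar t| = 0 := le_antisymm (this.trans hDTzero) (abs_nonneg _)
  have := abs_eq_zero.mp habs
  linarith
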